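/- arXiv:2503.01134 — 3 statements merged into one kernel-verified Lean document; each statement's English description precedes it below -/
import Mathlib

section
/- Let F and S be finite nonempty index sets, and let U ∈ ℝ^{F×S} be a matrix with nonnegative entries such that (i) every column of U sums to 1, and (ii) every row of U has exactly one strictly positive entry. Then, with Z := diag(U 1_S) where 1_S is the all-ones vector in ℝ^S, one has Uᵀ Z⁻¹ U = I_S, the identity matrix on ℝ^S. -/
open Matrix

/-- If `U` is column-stochastic and every row of `U` has exactly one strictly positive entry
(the future deterministically reveals the latent state), then the revealing matrix
`Uᵀ (diag(U 1))⁻¹ U` equals the identity. -/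
theorem revealing_matrix_eq_one_of_deterministic
    {F S : Type*} [Fintype F] [Fintype S] [DecidableEq F] [DecidableEq S]
    [Nonempty F] [Nonempty S]
    (U : Matrix F S ℝ)
    (hU : ∀ f s, 0 ≤ U f s)
    (hcol : ∀ s, ∑ f, U f s = 1)
    (hrow : ∀ f, ∃! s, 0 < U f s) :
    Uᵀ * (Matrix.diagonal (U.mulVec (fun _ => 1)))⁻¹ * U = 1 := by
  have hzero : ∀ f s, ¬ (0 < U f s) → U f s = 0 :=
    fun f s h => le_antisymm (not_lt.mp h) (hU f s)
  set d : F → ℝ := U.mulVec (fun _ => 1) with hd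
  have hdsum : ∀ f, d f = ∑ u, U f u := by
    intro f; simp [hd, Matrix.mulVec, dotProduct]
  have hdpos : ∀ f, 0 < d f := by
    intro f
    obtain ⟨σ, hσpos, -⟩ := hrow f
    rw [hdsum f]
    exact lt_of_lt_of_le hσpos (Finset.single_le_sum (fun u _ => hU f u) (Finset.mem_univ σ))
  have hinv : (Matrix.diagonal d)⁻¹ = Matrix.diagonal (fun f => (d f)⁻¹) := by
    apply Matrix.inv_eq_right_inv
    rw [Matrix.diagonal_mul_diagonal]
    convert Matrix.diagonal_one with f
    exact mul_inv_cancel₀ (hdpos f).ne'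
  ext s t
  rw [hinv]
  have hentry : (Uᵀ * (Matrix.diagonal (fun f => (d f)⁻¹)) * U) s t
      = ∑ f, U f s * (d f)⁻¹ * U f t := by
    simp [Matrix.mul_apply, Matrix.diagonal_apply, mul_ite, mul_zero, ite_mul, zero_mul,
      Finset.sum_ite_eq]
  rw [hentry]
  rcases eq_or_ne s t with rfl | hst
  · rw [Matrix.one_apply_eq]
    have hterm : ∀ f, U f s * (d f)⁻¹ * U f s = U f s := by
      intro f
      obtain ⟨σ, hσpos, hσuniq⟩ := hrow f
      by_cases hfs : 0 < U f s
      · have hs : s = σ := hσuniq s hfs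
        subst hs
        have hsum : d f = U f s := by
          rw [hdsum f]
          refine Finset.sum_eq_single s (fun u _ hu => hzero f u (fun h => hu (hσuniq u h)))
            (fun h => absurd (Finset.mem_univ s) h)
        rw [hsum]
        field_simp
      · rw [hzero f s hfs]; ring
    rw [Finset.sum_congr rfl (fun f _ => hterm f)]
    exact hcol s
  · rw [Matrix.one_apply_ne hst]
    refine Finset.sum_eq_zero (fun f _ => ?_)
    obtain ⟨σ, hσpos, hσuniq⟩ := hrow f
    by_cases hfs : 0 < U f s
    · have hs : s = σ := hσuniq s hfs
      have ht : U f t = 0 := hzero f t (fun h => hst (hs.trans (hσuniq t h).symm))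
      rw [ht]; ring
    · rw [hzero f s hfs]; ring
end

section
/- Let F, O, S be finite nonempty index sets with g : F → O surjective, and let U ∈ ℝ^{F×S} be a matrix with nonnegative entries whose every row sum is strictly positive. Define E ∈ ℝ^{O×S} by E_{os} := Σ_{f : g(f)=o} U_{fs}, and define Σ_F := Uᵀ (diag(U 1_S))⁻¹ U and Σ_O := Eᵀ (diag(E 1_S))⁻¹ E, where 1_S ∈ ℝ^S is the all-ones vector. Then: (i) Σ_F − Σ_O is positive semidefinite; and (ii) if both Σ_F and Σ_O are invertible, then ‖Σ_F⁻¹‖₁ ≤ |S| · ‖Σ_O⁻¹‖₁, where ‖·‖₁ is the induced L1 operator norm. -/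
open Matrix

/-- The `L1` norm of a vector: the sum of the absolute values of its entries. -/
def vecL1 {n : Type*} [Fintype n] (x : n → ℝ) : ℝ := ∑ i, |x i|

/-- The induced `L1` operator norm of a matrix: `sup_{x ≠ 0} ‖Mx‖₁ / ‖x‖₁`. -/
noncomputable def l1OpNorm {m n : Type*} [Fintype m] [Fintype n] (M : Matrix m n ℝ) : ℝ :=
  sSup ((fun x => vecL1 (M.mulVec x) / vecL1 x) '' {x : n → ℝ | x ≠ 0})

/-! Both matrices are weighted Gram matrices, with quadratic forms `∑_f (U x)_f² / r_f` and
`∑_o (E x)_o² / R_o`, where `r`, `R` are the row sums. Since `(E x)_o` and `R_o` are the sums of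
`(U x)_f` and `r_f` over the fibre `g⁻¹ o`, the Cauchy–Schwarz inequality in Sedrakyan's form
`(∑ a)² / ∑ b ≤ ∑ a² / b` gives `Σ_O ⪯ Σ_F`. Inversion reverses the Loewner order, so
`Σ_F⁻¹ ⪯ Σ_O⁻¹`; hence each diagonal entry of `Σ_F⁻¹` is at most the corresponding one of `Σ_O⁻¹`,
which is at most `‖Σ_O⁻¹‖₁`. As `|C i j| ≤ (C i i + C j j) / 2` for positive semidefinite `C`,
every column of `Σ_F⁻¹` has `L1` norm at most `|S| ‖Σ_O⁻¹‖₁`. -/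

section L1OpNorm

variable {m n : Type*} [Fintype m] [Fintype n]

lemma vecL1_nonneg (x : n → ℝ) : 0 ≤ vecL1 x :=
  Finset.sum_nonneg fun _ _ => abs_nonneg _

lemma l1OpNorm_nonneg (M : Matrix m n ℝ) : 0 ≤ l1OpNorm M :=
  Real.sSup_nonneg <| by
    rintro _ ⟨x, -, rfl⟩
    exact div_nonneg (vecL1_nonneg _) (vecL1_nonneg _)

lemma vecL1_mulVec_le_of_colSum_le {M : Matrix m n ℝ} {K : ℝ} (hK : ∀ j, ∑ i, |M i j| ≤ K)
    (x : n → ℝ) : vecL1 (M *ᵥ x) ≤ K * vecL1 x :=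
  calc vecL1 (M *ᵥ x) ≤ ∑ i, ∑ j, |M i j| * |x j| := by
        refine Finset.sum_le_sum fun i _ => ?_
        simpa only [abs_mul, mulVec, dotProduct] using
          Finset.abs_sum_le_sum_abs (fun j => M i j * x j) Finset.univ
    _ = ∑ j, (∑ i, |M i j|) * |x j| := by
        rw [Finset.sum_comm]
        simp only [Finset.sum_mul]
    _ ≤ ∑ j, K * |x j| := by gcongr with j; exact hK j
    _ = K * vecL1 x := (Finset.mul_sum ..).symm

lemma l1OpNorm_le_of_colSum_le {M : Matrix m n ℝ} {K : ℝ} (hK₀ : 0 ≤ K)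
    (hK : ∀ j, ∑ i, |M i j| ≤ K) : l1OpNorm M ≤ K :=
  Real.sSup_le (by
    rintro _ ⟨x, -, rfl⟩
    exact div_le_of_le_mul₀ (vecL1_nonneg x) hK₀ (vecL1_mulVec_le_of_colSum_le hK x)) hK₀

lemma colSum_le_l1OpNorm [DecidableEq n] (M : Matrix m n ℝ) (j : n) :
    ∑ i, |M i j| ≤ l1OpNorm M := by
  have hsingle : vecL1 (Pi.single j (1 : ℝ)) = 1 := by
    simp [vecL1, Pi.single_apply, apply_ite]
  have hbdd : BddAbove ((fun x => vecL1 (M *ᵥ x) / vecL1 x) '' {x : n → ℝ | x ≠ 0}) := by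
    refine ⟨∑ k, ∑ i, |M i k|, ?_⟩
    rintro _ ⟨x, -, rfl⟩
    refine div_le_of_le_mul₀ (vecL1_nonneg x) (by positivity) (vecL1_mulVec_le_of_colSum_le ?_ x)
    exact fun k => Finset.single_le_sum (f := fun k => ∑ i, |M i k|)
      (fun _ _ => by positivity) (Finset.mem_univ k)
  refine le_csSup hbdd ⟨Pi.single j 1, by simp, ?_⟩
  simp only [mulVec_single_one, hsingle, div_one]
  rfl

end L1OpNorm

namespace Matrix.PosSemidef

variable {n : Type*} [Fintype n] [DecidableEq n]

lemma abs_apply_le {C : Matrix n n ℝ} (hC : C.PosSemidef) (i j : n) :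
    |C i j| ≤ (C i i + C j j) / 2 := by
  have hsymm : C j i = C i j := hC.1.apply i j
  have quad (t : ℝ) : 0 ≤ C i i + 2 * t * C i j + t ^ 2 * C j j := by
    have h := hC.dotProduct_mulVec_nonneg (Pi.single i 1 + t • Pi.single j 1)
    simp only [star_trivial, mulVec_add, mulVec_smul, mulVec_single_one, add_dotProduct,
      dotProduct_add, smul_dotProduct, dotProduct_smul, single_one_dotProduct, col,
      transpose_apply, hsymm, smul_eq_mul] at h
    linear_combination h
  rw [abs_le]
  constructor <;> linarith [quad 1, quad (-1)]

lemma inv_sub_inv {A B : Matrix n n ℝ} (hB : B.PosSemidef) (hAB : (A - B).PosSemidef)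
    (hA_det : IsUnit A.det) (hB_det : IsUnit B.det) : (B⁻¹ - A⁻¹).PosSemidef := by
  have hA_herm : A.IsHermitian := by simpa using (hB.add hAB).1
  refine of_dotProduct_mulVec_nonneg (hB.1.inv.sub hA_herm.inv) fun x => ?_
  set u := A⁻¹ *ᵥ x
  set v := B⁻¹ *ᵥ x
  have hAu : A *ᵥ u = x := by rw [mulVec_mulVec, mul_nonsing_inv A hA_det, one_mulVec]
  have hBv : B *ᵥ v = x := by rw [mulVec_mulVec, mul_nonsing_inv B hB_det, one_mulVec]
  have hvBu : v ⬝ᵥ (B *ᵥ u) = u ⬝ᵥ x := by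
    rw [dotProduct_mulVec, ← mulVec_transpose, (isHermitian_iff_isSymm.mp hB.1).eq, hBv,
      dotProduct_comm]
  -- `0 ≤ (v - u)ᵀ B (v - u) + uᵀ (A - B) u = xᵀ v - xᵀ u`
  have h₁ := hB.dotProduct_mulVec_nonneg (v - u)
  have h₂ := hAB.dotProduct_mulVec_nonneg u
  simp only [star_trivial, mulVec_sub, sub_mulVec, dotProduct_sub, sub_dotProduct, hAu, hBv,
    hvBu] at h₁ h₂ ⊢
  rw [dotProduct_comm x u, dotProduct_comm x v]
  linarith

end Matrix.PosSemidef

lemma l1OpNorm_le_card_mul_of_posSemidef_sub {n : Type*} [Fintype n] [DecidableEq n]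
    {C D : Matrix n n ℝ} (hC : C.PosSemidef) (hDC : (D - C).PosSemidef) :
    l1OpNorm C ≤ Fintype.card n * l1OpNorm D := by
  have hdiag (i : n) : C i i ≤ l1OpNorm D :=
    calc C i i ≤ D i i := by simpa using hDC.diag_nonneg (i := i)
      _ ≤ |D i i| := le_abs_self _
      _ ≤ ∑ k, |D k i| := Finset.single_le_sum (f := fun k => |D k i|)
          (fun _ _ => abs_nonneg _) (Finset.mem_univ i)
      _ ≤ l1OpNorm D := colSum_le_l1OpNorm D i
  refine l1OpNorm_le_of_colSum_le (by positivity [l1OpNorm_nonneg D]) fun j => ?_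
  calc ∑ i, |C i j| ≤ ∑ i, (C i i + C j j) / 2 := by gcongr with i; exact hC.abs_apply_le i j
    _ ≤ ∑ _i : n, l1OpNorm D := by gcongr with i; linarith [hdiag i, hdiag j]
    _ = Fintype.card n * l1OpNorm D := by simp

section RevealingMatrix

variable {m S : Type*} [Fintype m] [Fintype S] [DecidableEq m]

noncomputable def revealingMatrix (V : Matrix m S ℝ) : Matrix S S ℝ :=
  Vᵀ * (diagonal (V *ᵥ fun _ => 1))⁻¹ * V

lemma revealingMatrix_isHermitian (V : Matrix m S ℝ) : (revealingMatrix V).IsHermitian := by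
  simpa [revealingMatrix] using
    isHermitian_conjTranspose_mul_mul V (isHermitian_diagonal (V *ᵥ fun _ => 1)).inv

lemma dotProduct_revealingMatrix_mulVec {V : Matrix m S ℝ} (hV : ∀ i, ∑ s, V i s ≠ 0)
    (x : S → ℝ) :
    x ⬝ᵥ (revealingMatrix V *ᵥ x) = ∑ i, (V *ᵥ x) i ^ 2 / ∑ s, V i s := by
  have hrow : (V *ᵥ fun _ => 1) = fun i => ∑ s, V i s := by
    funext i; simp [mulVec, dotProduct]
  have hinv : (diagonal fun i => ∑ s, V i s)⁻¹ = diagonal fun i => (∑ s, V i s)⁻¹ := by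
    refine inv_eq_right_inv ?_
    rw [diagonal_mul_diagonal, ← diagonal_one]
    exact congrArg diagonal (funext fun i => mul_inv_cancel₀ (hV i))
  rw [revealingMatrix, hrow, hinv, ← mulVec_mulVec, ← mulVec_mulVec, dotProduct_mulVec,
    vecMul_transpose]
  simp only [dotProduct, mulVec_diagonal]
  exact Finset.sum_congr rfl fun i _ => by ring

lemma revealingMatrix_posSemidef {V : Matrix m S ℝ} (hV : ∀ i, 0 < ∑ s, V i s) :
    (revealingMatrix V).PosSemidef := by
  refine .of_dotProduct_mulVec_nonneg (revealingMatrix_isHermitian V) fun x => ?_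
  rw [star_trivial, dotProduct_revealingMatrix_mulVec (fun i => (hV i).ne')]
  exact Finset.sum_nonneg fun i _ => div_nonneg (sq_nonneg _) (hV i).le

end RevealingMatrix

section FiberSum

variable {F O S : Type*} [Fintype F] [Fintype S] [DecidableEq O]
  {g : F → O} {U : Matrix F S ℝ} {E : Matrix O S ℝ}

lemma mulVec_eq_sum_fiber
    (hE : ∀ o s, E o s = ∑ f ∈ Finset.univ.filter (fun f => g f = o), U f s) (x : S → ℝ) (o : O) :
    (E *ᵥ x) o = ∑ f ∈ Finset.univ.filter (fun f => g f = o), (U *ᵥ x) f := by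
  simp only [mulVec, dotProduct, hE, Finset.sum_mul]
  exact Finset.sum_comm

lemma sum_row_eq_sum_fiber
    (hE : ∀ o s, E o s = ∑ f ∈ Finset.univ.filter (fun f => g f = o), U f s) (o : O) :
    ∑ s, E o s = ∑ f ∈ Finset.univ.filter (fun f => g f = o), ∑ s, U f s := by
  simp only [hE]
  exact Finset.sum_comm

lemma sum_row_pos_of_fiber (hg : Function.Surjective g) (hU : ∀ f, 0 < ∑ s, U f s)
    (hE : ∀ o s, E o s = ∑ f ∈ Finset.univ.filter (fun f => g f = o), U f s) (o : O) :
    0 < ∑ s, E o s := by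
  obtain ⟨f, rfl⟩ := hg o
  rw [sum_row_eq_sum_fiber hE]
  exact Finset.sum_pos (fun f _ => hU f) ⟨f, by simp⟩

variable [Fintype O] [DecidableEq F]

lemma posSemidef_revealingMatrix_sub_fiber (hg : Function.Surjective g)
    (hU : ∀ f, 0 < ∑ s, U f s)
    (hE : ∀ o s, E o s = ∑ f ∈ Finset.univ.filter (fun f => g f = o), U f s) :
    (revealingMatrix U - revealingMatrix E).PosSemidef := by
  refine .of_dotProduct_mulVec_nonneg
    ((revealingMatrix_isHermitian U).sub (revealingMatrix_isHermitian E)) fun x => ?_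
  rw [star_trivial, sub_mulVec, dotProduct_sub, sub_nonneg,
    dotProduct_revealingMatrix_mulVec (fun f => (hU f).ne'),
    dotProduct_revealingMatrix_mulVec (fun o => (sum_row_pos_of_fiber hg hU hE o).ne'),
    ← Finset.sum_fiberwise Finset.univ g]
  gcongr with o
  rw [mulVec_eq_sum_fiber hE, sum_row_eq_sum_fiber hE]
  exact Finset.sq_sum_div_le_sum_sq_div _ _ fun f _ => hU f

end FiberSum

theorem multi_step_revealing_of_single_step_general
    {F O S : Type*} [Fintype F] [Fintype O] [Fintype S]
    [DecidableEq F] [DecidableEq O] [DecidableEq S]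
    (g : F → O) (hg : Function.Surjective g)
    (U : Matrix F S ℝ)
    (hrow : ∀ f, 0 < ∑ s, U f s)
    (E : Matrix O S ℝ)
    (hE : ∀ o s, E o s = ∑ f ∈ Finset.univ.filter (fun f => g f = o), U f s)
    (SigF SigO : Matrix S S ℝ)
    (hSigF : SigF = Uᵀ * (Matrix.diagonal (U.mulVec (fun _ => 1)))⁻¹ * U)
    (hSigO : SigO = Eᵀ * (Matrix.diagonal (E.mulVec (fun _ => 1)))⁻¹ * E) :
    (SigF - SigO).PosSemidef ∧
      (IsUnit SigF.det → IsUnit SigO.det →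
        l1OpNorm SigF⁻¹ ≤ (Fintype.card S : ℝ) * l1OpNorm SigO⁻¹) := by
  change SigF = revealingMatrix U at hSigF
  change SigO = revealingMatrix E at hSigO
  subst hSigF hSigO
  have hle := posSemidef_revealingMatrix_sub_fiber hg hrow hE
  refine ⟨hle, fun hdetF hdetO => ?_⟩
  have hSigO_psd := revealingMatrix_posSemidef (sum_row_pos_of_fiber hg hrow hE)
  exact l1OpNorm_le_card_mul_of_posSemidef_sub (revealingMatrix_posSemidef hrow).inv
    (hSigO_psd.inv_sub_inv hle hdetF hdetO)

/-- Multi-step vs. single-step revealing (Appendix F.1, memoryless behavior policy):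
`Σ_O ⪯ Σ_F` and, when both are invertible, `‖Σ_F⁻¹‖₁ ≤ |S| ‖Σ_O⁻¹‖₁`. -/
theorem multi_step_revealing_of_single_step
    {F O S : Type*} [Fintype F] [Fintype O] [Fintype S]
    [DecidableEq F] [DecidableEq O] [DecidableEq S]
    [Nonempty F] [Nonempty O] [Nonempty S]
    (g : F → O) (hg : Function.Surjective g)
    (U : Matrix F S ℝ) (hU : ∀ f s, 0 ≤ U f s)
    (hrow : ∀ f, 0 < ∑ s, U f s)
    (E : Matrix O S ℝ)
    (hE : ∀ o s, E o s = ∑ f ∈ Finset.univ.filter (fun f => g f = o), U f s)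
    (SigF SigO : Matrix S S ℝ)
    (hSigF : SigF = Uᵀ * (Matrix.diagonal (U.mulVec (fun _ => 1)))⁻¹ * U)
    (hSigO : SigO = Eᵀ * (Matrix.diagonal (E.mulVec (fun _ => 1)))⁻¹ * E) :
    (SigF - SigO).PosSemidef ∧
      (IsUnit SigF.det → IsUnit SigO.det →
        l1OpNorm SigF⁻¹ ≤ (Fintype.card S : ℝ) * l1OpNorm SigO⁻¹) :=
  multi_step_revealing_of_single_step_general g hg U hrow E hE SigF SigO hSigF hSigO
end

section
/- Let T be a finite nonempty index set, let μ : T → ℝ≥0 be nonnegative weights, let d ≥ 1, and let b : T → ℝ^d satisfy ‖b(t)‖₂ ≤ 1 for all t ∈ T (Euclidean norm). Define the symmetric positive semidefinite matrix Σ := Σ_{t∈T} μ(t) b(t) b(t)ᵀ, and let λ_min(Σ) be its smallest eigenvalue. Then for every x ∈ ℝ^d, Σ_{t∈T} μ(t) |⟨x, b(t)⟩| ≥ λ_min(Σ) · ‖x‖₂, where ⟨·,·⟩ is the Euclidean inner product. -/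
/-!
Let `λ` be the least eigenvalue of `Σ = ∑ₜ μₜ bₜ bₜᵀ`, so that `Σ - λ I` is positive semidefinite.
Then `λ ‖x‖² ≤ xᵀ Σ x = ∑ₜ μₜ ⟨x, bₜ⟩²`, and Cauchy–Schwarz with `‖bₜ‖ ≤ 1` bounds one factor
`|⟨x, bₜ⟩|` of each term by `‖x‖`, giving `λ ‖x‖² ≤ ‖x‖ ∑ₜ μₜ |⟨x, bₜ⟩|`; cancel one `‖x‖`.
-/

open Matrix

noncomputable def eucNorm {n : Type*} [Fintype n] (x : n → ℝ) : ℝ :=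
  Real.sqrt (∑ i, x i ^ 2)

namespace Matrix

open scoped MatrixOrder

theorem IsHermitian.iInf_eigenvalues_mul_dotProduct_self_le {n : Type*} [Fintype n]
    [DecidableEq n] {A : Matrix n n ℝ} (hA : A.IsHermitian) (x : n → ℝ) :
    (⨅ i, hA.eigenvalues i) * (x ⬝ᵥ x) ≤ x ⬝ᵥ A *ᵥ x := by
  have hle : algebraMap ℝ _ (⨅ i, hA.eigenvalues i) ≤ A := by
    refine (algebraMap_le_iff_le_spectrum hA.isSelfAdjoint).2 fun r hr => ?_
    obtain ⟨i, rfl⟩ := hA.spectrum_real_eq_range_eigenvalues ▸ hr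
    exact ciInf_le (Finite.bddBelow_range _) i
  simpa [sub_mulVec, algebraMap_eq_diagonal, Pi.algebraMap_def, dotProduct_sub, sub_nonneg]
    using (le_iff.1 hle).dotProduct_mulVec_nonneg x

theorem dotProduct_vecMulVec_mulVec {m n R : Type*} [Fintype m] [Fintype n] [CommSemiring R]
    (x u : m → R) (v y : n → R) :
    x ⬝ᵥ vecMulVec u v *ᵥ y = (x ⬝ᵥ u) * (v ⬝ᵥ y) := by
  rw [vecMulVec_mulVec, op_smul_eq_smul, dotProduct_smul, smul_eq_mul, mul_comm]

theorem dotProduct_sum_smul_vecMulVec_self_mulVec {ι n R : Type*} [Fintype ι] [Fintype n]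
    [CommSemiring R] (μ : ι → R) (b : ι → n → R) (x : n → R) :
    x ⬝ᵥ (∑ t, μ t • vecMulVec (b t) (b t)) *ᵥ x = ∑ t, μ t * (x ⬝ᵥ b t) ^ 2 := by
  simp only [sum_mulVec, dotProduct_sum, smul_mulVec, dotProduct_smul, smul_eq_mul,
    dotProduct_vecMulVec_mulVec, dotProduct_comm (b _) x, sq]

end Matrix

section eucNorm

variable {n : Type*} [Fintype n]

theorem eucNorm_nonneg (x : n → ℝ) : 0 ≤ eucNorm x :=
  Real.sqrt_nonneg _

theorem eucNorm_eq_norm_toLp (x : n → ℝ) : eucNorm x = ‖WithLp.toLp 2 x‖ := by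
  simp [eucNorm, EuclideanSpace.norm_eq]

theorem dotProduct_self_eq_eucNorm_sq (x : n → ℝ) : x ⬝ᵥ x = eucNorm x ^ 2 := by
  rw [eucNorm, Real.sq_sqrt (Finset.sum_nonneg fun i _ => sq_nonneg _)]
  simp [dotProduct, sq]

theorem abs_dotProduct_le_eucNorm_mul (x y : n → ℝ) : |x ⬝ᵥ y| ≤ eucNorm x * eucNorm y := by
  simpa [eucNorm_eq_norm_toLp, EuclideanSpace.inner_toLp_toLp, dotProduct_comm] using
    abs_real_inner_le_norm (WithLp.toLp 2 x) (WithLp.toLp 2 y)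

theorem sum_mul_dotProduct_sq_le {ι : Type*} [Fintype ι] {μ : ι → ℝ} (hμ : ∀ t, 0 ≤ μ t)
    {b : ι → n → ℝ} (hb : ∀ t, eucNorm (b t) ≤ 1) (x : n → ℝ) :
    ∑ t, μ t * (x ⬝ᵥ b t) ^ 2 ≤ eucNorm x * ∑ t, μ t * |x ⬝ᵥ b t| := by
  rw [Finset.mul_sum]
  refine Finset.sum_le_sum fun t _ => ?_
  have hcs : |x ⬝ᵥ b t| ≤ eucNorm x :=
    (abs_dotProduct_le_eucNorm_mul x (b t)).trans
      (mul_le_of_le_one_right (eucNorm_nonneg x) (hb t))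
  calc μ t * (x ⬝ᵥ b t) ^ 2 = μ t * |x ⬝ᵥ b t| * |x ⬝ᵥ b t| := by
        rw [mul_assoc, ← sq, sq_abs]
    _ ≤ μ t * |x ⬝ᵥ b t| * eucNorm x := by
        gcongr
        exact mul_nonneg (hμ t) (abs_nonneg _)
    _ = eucNorm x * (μ t * |x ⬝ᵥ b t|) := mul_comm _ _

end eucNorm

theorem weighted_abs_inner_ge_min_eigenvalue_general
    {T : Type*} [Fintype T]
    (μ : T → ℝ) (hμ : ∀ t, 0 ≤ μ t)
    (d : ℕ)
    (b : T → Fin d → ℝ) (hb : ∀ t, eucNorm (b t) ≤ 1)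
    (Sigm : Matrix (Fin d) (Fin d) ℝ)
    (hSig : Sigm = ∑ t, μ t • Matrix.vecMulVec (b t) (b t))
    (hherm : Sigm.IsHermitian) :
    ∀ x : Fin d → ℝ,
      (⨅ i, hherm.eigenvalues i) * eucNorm x ≤ ∑ t, μ t * |∑ i, x i * b t i| := by
  intro x
  change _ ≤ ∑ t, μ t * |x ⬝ᵥ b t|
  have hquad : (⨅ i, hherm.eigenvalues i) * eucNorm x ^ 2 ≤
      eucNorm x * ∑ t, μ t * |x ⬝ᵥ b t| := calc
    _ = (⨅ i, hherm.eigenvalues i) * (x ⬝ᵥ x) := by rw [dotProduct_self_eq_eucNorm_sq]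
    _ ≤ x ⬝ᵥ Sigm *ᵥ x := hherm.iInf_eigenvalues_mul_dotProduct_self_le x
    _ = ∑ t, μ t * (x ⬝ᵥ b t) ^ 2 := by rw [hSig, dotProduct_sum_smul_vecMulVec_self_mulVec]
    _ ≤ eucNorm x * ∑ t, μ t * |x ⬝ᵥ b t| := sum_mul_dotProduct_sq_le hμ hb x
  rcases (eucNorm_nonneg x).eq_or_lt with hx | hx
  · rw [← hx, mul_zero]
    exact Finset.sum_nonneg fun t _ => mul_nonneg (hμ t) (abs_nonneg _)
  · exact le_of_mul_le_mul_right (by linarith) hx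

/-- Key inequality (Eq. (11)) in the proof of Theorem 3: for belief vectors of Euclidean
norm at most one, `Σ_t μ(t) |⟨x, b(t)⟩| ≥ λ_min(Σ) ‖x‖₂` where
`Σ = Σ_t μ(t) b(t) b(t)ᵀ`. -/
theorem weighted_abs_inner_ge_min_eigenvalue
    {T : Type*} [Fintype T] [Nonempty T]
    (μ : T → ℝ) (hμ : ∀ t, 0 ≤ μ t)
    (d : ℕ) (hd : 1 ≤ d)
    (b : T → Fin d → ℝ) (hb : ∀ t, eucNorm (b t) ≤ 1)
    (Sigm : Matrix (Fin d) (Fin d) ℝ)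
    (hSig : Sigm = ∑ t, μ t • Matrix.vecMulVec (b t) (b t))
    (hherm : Sigm.IsHermitian) :
    ∀ x : Fin d → ℝ,
      (⨅ i, hherm.eigenvalues i) * eucNorm x ≤ ∑ t, μ t * |∑ i, x i * b t i| :=
  weighted_abs_inner_ge_min_eigenvalue_general μ hμ d b hb Sigm hSig hherm
end
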